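/- The S-cascade function g(x) = (x/2)²/((x/2)² + (1-x)²) is not concave on [0,1]; in particular g is convex near 0, so the induced set function f(S) = g(|S|/d) for d ≥ 4 is not submodular: f({u}) - f(∅) < f({u,v}) - f({v}) for distinct u, v. -/

import Mathlib

/-!
Near `0` the S-cascade behaves like `x² / 4`, so it is convex there: with `t = 1/d`, the
inequality `2 g(t) < g(2t)` reduces, after clearing denominators, to `5 t² < 2`. For a set
function depending only on cardinality this says the marginal gain of a second element exceeds
that of the first. Globally, `g(1/2) = 1/5` lies below the chord value `1/2` between
`g(0) = 0` and `g(1) = 1`.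
-/

open Finset

noncomputable def sCascade (x : ℝ) : ℝ := (x / 2) ^ 2 / ((x / 2) ^ 2 + (1 - x) ^ 2)

lemma sCascade_zero : sCascade 0 = 0 := by norm_num [sCascade]

lemma sCascade_one : sCascade 1 = 1 := by norm_num [sCascade]

lemma sCascade_half : sCascade (1 / 2) = 1 / 5 := by norm_num [sCascade]

lemma not_concaveOn_sCascade : ¬ ConcaveOn ℝ (Set.Icc 0 1) sCascade := by
  intro h
  have chord := h.2 (Set.left_mem_Icc.2 zero_le_one) (Set.right_mem_Icc.2 zero_le_one)
    (one_half_pos.le) (one_half_pos.le) (add_halves 1)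
  norm_num [sCascade_zero, sCascade_one, ← one_div, sCascade_half] at chord

lemma two_mul_sCascade_lt {t : ℝ} (ht : 0 < t) (ht2 : 5 * t ^ 2 < 2) :
    2 * sCascade t < sCascade (2 * t) := by
  have hden₁ : 0 < (t / 2) ^ 2 + (1 - t) ^ 2 := by positivity
  have hden₂ : 0 < (2 * t / 2) ^ 2 + (1 - 2 * t) ^ 2 := by positivity
  unfold sCascade
  rw [mul_div_assoc', div_lt_div_iff₀ hden₁ hden₂]
  nlinarith [pow_pos ht 2]

lemma sub_lt_sub_of_card_increments {α : Type*} [DecidableEq α] {f : Finset α → ℝ}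
    {φ : ℕ → ℝ} (hf : ∀ S, f S = φ #S) (hφ : φ 1 - φ 0 < φ 2 - φ 1) {u v : α} (huv : u ≠ v) :
    f {u} - f ∅ < f {u, v} - f {v} := by
  simpa only [hf, card_singleton, card_empty, card_pair huv] using hφ

theorem scm_not_submodular {α : Type*} [DecidableEq α]
    (g : ℝ → ℝ) (hg : ∀ x : ℝ, g x = (x / 2) ^ 2 / ((x / 2) ^ 2 + (1 - x) ^ 2)) :
    ¬ ConcaveOn ℝ (Set.Icc (0:ℝ) 1) g ∧
    ∀ (d : ℕ), 4 ≤ d →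
      ∀ (f : Finset α → ℝ), (∀ S : Finset α, f S = g ((S.card : ℝ) / d)) →
        ∀ u v : α, u ≠ v → f {u} - f ∅ < f {u, v} - f {v} := by
  obtain rfl : g = sCascade := funext hg
  refine ⟨not_concaveOn_sCascade, fun d hd f hf u v huv => ?_⟩
  refine sub_lt_sub_of_card_increments (φ := fun k => sCascade (k / d)) hf ?_ huv
  have ht₀ : (0 : ℝ) < 1 / d := by positivity
  have ht : 5 * (1 / d : ℝ) ^ 2 < 2 := by
    have : (1 / d : ℝ) ≤ 1 / 4 := one_div_le_one_div_of_le (by norm_num) (by exact_mod_cast hd)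
    nlinarith
  have key := two_mul_sCascade_lt ht₀ ht
  have h2 : ((2 : ℕ) : ℝ) / d = 2 * (1 / d) := by push_cast; ring
  simp only [Nat.cast_zero, zero_div, sCascade_zero, Nat.cast_one, h2]
  linarith
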